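/- arXiv:0909.4884 — 5 statements merged into one kernel-verified Lean document; each statement's English description precedes it below -/
import Mathlib

section
/- If a noncommutative polynomial p is harmonic (Lap[p,h]=0), then Lap[p^T·p, h] = 2·∑_{i=1}^{g} (D[p, x_i, h])^T · D[p, x_i, h]. In particular, the square p^T·p of a harmonic polynomial is subharmonic (its Laplacian is a sum of terms of the form q^T·q, hence matrix positive). -/
noncomputable section

/-- Variables: `some i` is `xᵢ`, `none` is the direction variable `h`. -/
abbrev Var (g : ℕ) := Option (Fin g)

/-- Noncommutative polynomials `ℝ⟨x₁,…,x_g,h⟩`. -/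
abbrev NC (g : ℕ) := MonoidAlgebra ℝ (FreeMonoid (Var g))

/-- The monomial corresponding to a word. -/
def mono (g : ℕ) (w : List (Var g)) : NC g :=
  MonoidAlgebra.of ℝ (FreeMonoid (Var g)) (FreeMonoid.ofList w)

/-- The generator `xᵢ`. -/
def Xv (g : ℕ) (i : Fin g) : NC g := mono g [some i]

/-- The direction variable `h`. -/
def Hv (g : ℕ) : NC g := mono g [none]

/-- Directional derivative of a word in `xᵢ` in direction `h`: sum of the
terms obtained by replacing one occurrence of `xᵢ` by `h`. -/
def wordD (g : ℕ) (i : Fin g) : List (Var g) → NC g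
  | [] => 0
  | a :: w =>
      (if a = some i then mono g (none :: w) else 0) + mono g [a] * wordD g i w

/-- Directional derivative `D[p, xᵢ, h]`, extended linearly from words. -/
def D (g : ℕ) (i : Fin g) (p : NC g) : NC g :=
  Finsupp.sum p.coeff fun w c => c • wordD g i (FreeMonoid.toList w)

/-- The noncommutative Laplacian `Lap[p,h] := ∑ᵢ D[D[p,xᵢ,h],xᵢ,h]`. -/
def Lap (g : ℕ) (p : NC g) : NC g := ∑ i : Fin g, D g i (D g i p)

/-- The transpose: linear anti-automorphism reversing words and fixing generators. -/
def transp (g : ℕ) (p : NC g) : NC g :=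
  MonoidAlgebra.ofCoeff
    (Finsupp.mapDomain (fun w => FreeMonoid.ofList (FreeMonoid.toList w).reverse) p.coeff)

/-- Evaluation of a polynomial at a tuple of matrices (one for each variable). -/
def eval (g n : ℕ) (M : Var g → Matrix (Fin n) (Fin n) ℝ) (p : NC g) :
    Matrix (Fin n) (Fin n) ℝ :=
  Finsupp.sum p.coeff fun w c => c • ((FreeMonoid.toList w).map M).prod

/-- `p` is a polynomial in `x₁,…,x_g` only (the variable `h` does not occur). -/
def NoH (g : ℕ) (p : NC g) : Prop :=
  ∀ w ∈ p.coeff.support, none ∉ FreeMonoid.toList w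

/-- `p` is a homogeneous polynomial of degree `d` in the variables `x₁,…,x_g`. -/
def HomogX (g : ℕ) (d : ℕ) (p : NC g) : Prop :=
  ∀ w ∈ p.coeff.support, none ∉ FreeMonoid.toList w ∧ (FreeMonoid.toList w).length = d


/-!
`D[·, xᵢ, h]` obeys the Leibniz rule and commutes with the transpose. Applying the Leibniz rule
twice gives `Lap[q p] = Lap[q] p + 2 ∑ᵢ D[q, xᵢ] D[p, xᵢ] + q Lap[p]`; for `q = pᵀ` both outer
terms vanish, since `Lap[pᵀ] = Lap[p]ᵀ = 0`.
-/

section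

variable {g : ℕ} (i : Fin g)

lemma mono_eq_single (w : List (Var g)) :
    mono g w = MonoidAlgebra.single (FreeMonoid.ofList w) (1 : ℝ) := rfl

lemma mono_append (u v : List (Var g)) : mono g (u ++ v) = mono g u * mono g v := by
  rw [mono_eq_single, mono_eq_single, mono_eq_single, MonoidAlgebra.single_mul_single, mul_one]
  rfl

lemma wordD_append (u v : List (Var g)) :
    wordD g i (u ++ v) = wordD g i u * mono g v + mono g u * wordD g i v := by
  induction u with
  | nil => simp [wordD, show mono g ([] : List (Var g)) = 1 from rfl]
  | cons a u ih =>
      rw [List.cons_append, wordD, wordD, ih, show none :: (u ++ v) = (none :: u) ++ v from rfl,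
        mono_append, show a :: u = [a] ++ u from rfl, mono_append]
      by_cases h : a = some i <;> simp [h, mul_add, add_mul, mul_assoc, add_assoc]

lemma D_eq_linearCombination (p : NC g) :
    D g i p = Finsupp.linearCombination ℝ (fun w => wordD g i (FreeMonoid.toList w)) p.coeff := by
  rw [Finsupp.linearCombination_apply]; rfl

lemma D_zero : D g i 0 = 0 := by simp [D_eq_linearCombination]

lemma D_add (p q : NC g) : D g i (p + q) = D g i p + D g i q := by
  simp [D_eq_linearCombination]

lemma D_single (w : FreeMonoid (Var g)) (c : ℝ) :
    D g i (MonoidAlgebra.single w c) = c • wordD g i (FreeMonoid.toList w) :=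
  Finsupp.sum_single_index (by simp)

lemma single_eq_smul_mono (w : FreeMonoid (Var g)) (c : ℝ) :
    (MonoidAlgebra.single w c : NC g) = c • mono g (FreeMonoid.toList w) := by
  simp [mono_eq_single, MonoidAlgebra.smul_single]

lemma D_mul (p q : NC g) : D g i (p * q) = D g i p * q + p * D g i q := by
  induction p using MonoidAlgebra.induction_linear with
  | zero => simp [D_zero]
  | add p p' hp hp' => rw [add_mul, D_add, hp, hp', D_add]; noncomm_ring
  | single w c =>
      induction q using MonoidAlgebra.induction_linear with
      | zero => simp [D_zero]
      | add q q' hq hq' => rw [mul_add, D_add, hq, hq', D_add]; noncomm_ring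
      | single v d =>
          rw [MonoidAlgebra.single_mul_single, D_single, D_single, D_single,
            FreeMonoid.toList_mul, wordD_append, single_eq_smul_mono, single_eq_smul_mono]
          simp only [smul_add, smul_mul_assoc, mul_smul_comm, smul_smul, mul_comm d c]

lemma D_D_mul (p q : NC g) :
    D g i (D g i (p * q)) = D g i (D g i p) * q + 2 • (D g i p * D g i q) + p * D g i (D g i q) := by
  rw [D_mul, D_add, D_mul, D_mul, two_smul]
  abel

lemma Lap_mul (p q : NC g) :
    Lap g (p * q) = Lap g p * q + 2 • ∑ i : Fin g, D g i p * D g i q + p * Lap g q := by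
  simp only [Lap, D_D_mul, Finset.sum_add_distrib, Finset.sum_mul, Finset.mul_sum, Finset.smul_sum]

lemma transp_zero : transp g 0 = 0 := congrArg MonoidAlgebra.ofCoeff Finsupp.mapDomain_zero

lemma transp_add (p q : NC g) : transp g (p + q) = transp g p + transp g q :=
  congrArg MonoidAlgebra.ofCoeff Finsupp.mapDomain_add

lemma transp_smul (c : ℝ) (p : NC g) : transp g (c • p) = c • transp g p :=
  congrArg MonoidAlgebra.ofCoeff (Finsupp.mapDomain_smul _ _)

lemma transp_sum {ι : Type*} (s : Finset ι) (f : ι → NC g) :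
    transp g (∑ j ∈ s, f j) = ∑ j ∈ s, transp g (f j) :=
  map_sum (AddMonoidHom.mk' (transp g) transp_add) f s

lemma transp_single (w : FreeMonoid (Var g)) (c : ℝ) :
    transp g (MonoidAlgebra.single w c)
      = MonoidAlgebra.single (FreeMonoid.ofList (FreeMonoid.toList w).reverse) c :=
  congrArg MonoidAlgebra.ofCoeff Finsupp.mapDomain_single

lemma transp_mono (w : List (Var g)) : transp g (mono g w) = mono g w.reverse := by
  rw [mono_eq_single, transp_single, FreeMonoid.toList_ofList]; rfl

lemma transp_mul (p q : NC g) : transp g (p * q) = transp g q * transp g p := by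
  induction p using MonoidAlgebra.induction_linear with
  | zero => simp [transp_zero]
  | add p p' hp hp' => rw [add_mul, transp_add, hp, hp', transp_add, mul_add]
  | single w c =>
      induction q using MonoidAlgebra.induction_linear with
      | zero => simp [transp_zero]
      | add q q' hq hq' => rw [mul_add, transp_add, hq, hq', transp_add, add_mul]
      | single v d =>
          rw [MonoidAlgebra.single_mul_single, transp_single, transp_single, transp_single,
            MonoidAlgebra.single_mul_single, FreeMonoid.toList_mul, List.reverse_append,
            mul_comm d c]
          rfl

lemma transp_wordD (w : List (Var g)) : transp g (wordD g i w) = wordD g i w.reverse := by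
  induction w with
  | nil => simp [wordD, transp_zero]
  | cons a w ih =>
      rw [wordD, transp_add, transp_mul, ih, transp_mono, List.reverse_singleton,
        List.reverse_cons, wordD_append]
      by_cases h : a = some i <;> simp [h, wordD, mono_append, transp_zero, transp_mono, add_comm]

lemma transp_D (p : NC g) : transp g (D g i p) = D g i (transp g p) := by
  induction p using MonoidAlgebra.induction_linear with
  | zero => simp [D_zero, transp_zero]
  | add p p' hp hp' => rw [D_add, transp_add, hp, hp', transp_add, D_add]
  | single w c =>
      rw [D_single, transp_smul, transp_single, D_single, FreeMonoid.toList_ofList, transp_wordD]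

lemma transp_Lap (p : NC g) : transp g (Lap g p) = Lap g (transp g p) := by
  simp only [Lap, transp_sum, transp_D]

end

/-- the Laplacian of the square of a harmonic polynomial is a
sum of squares `2 ∑ᵢ (D[p,xᵢ,h])ᵀ D[p,xᵢ,h]`. -/
theorem lap_square_of_harmonic (g : ℕ) (p : NC g) (hp : Lap g p = 0) :
    Lap g (transp g p * p) = 2 • ∑ i : Fin g, transp g (D g i p) * D g i p := by
  rw [Lap_mul, ← transp_Lap, hp, transp_zero, zero_mul, mul_zero, zero_add, add_zero]
  simp only [transp_D]
end
end

section
/- Let γ = x_1 + i·x_2. For every d ≥ 1, the polynomials Re(γ^d) and Im(γ^d) are harmonic: Lap[Re(γ^d), h] = 0 and Lap[Im(γ^d), h] = 0, where Lap is the noncommutative Laplacian in the two variables x_1, x_2. -/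
noncomputable section

/-- Complex noncommutative polynomials `ℂ⟨x₁,x₂,h⟩`. -/
abbrev NCC := MonoidAlgebra ℂ (FreeMonoid (Var 2))

def XC (i : Fin 2) : NCC := MonoidAlgebra.of ℂ (FreeMonoid (Var 2)) (FreeMonoid.ofList [some i])

/-- `γ = x₁ + i x₂`. -/
def gam : NCC := XC 0 + Complex.I • XC 1

/-- Coefficientwise real part. -/
def rePart (p : NCC) : NC 2 := MonoidAlgebra.ofCoeff (Finsupp.mapRange Complex.re Complex.zero_re p.coeff)

/-- Coefficientwise imaginary part. -/
def imPart (p : NCC) : NC 2 := MonoidAlgebra.ofCoeff (Finsupp.mapRange Complex.im Complex.zero_im p.coeff)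

/-- Complex-linear transpose, reversing monomials. -/
def transpC (p : NCC) : NCC :=
  MonoidAlgebra.ofCoeff (Finsupp.mapDomain (fun w => FreeMonoid.ofList (FreeMonoid.toList w).reverse) p.coeff)

/-! The partial derivatives `∂ᵢ = D[·, xᵢ, h]` make sense over any commutative coefficient
semiring, are derivations, and commute with every additive map applied coefficientwise; hence
`Lap (Re p) = Re (Lap p)` and `Lap (Im p) = Im (Lap p)` with the right-hand `Lap` computed over `ℂ`.
Over `ℂ`, `∂₂ - i∂₁` is a derivation killing `γ` and `h`, so `∂₂ = i∂₁` on the subalgebra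
`ℂ⟨γ, h⟩` (Cauchy–Riemann). As `∂₁` maps `ℂ⟨γ, h⟩` into itself, `∂₂² = i²∂₁² = -∂₁²` there,
so every element of `ℂ⟨γ, h⟩`, in particular `γ^d`, is harmonic. -/

open MonoidAlgebra

section Derivative

variable (R : Type*) [CommSemiring R] {g : ℕ}

def wordDer (i : Fin g) : List (Var g) → R[FreeMonoid (Var g)]
  | [] => 0
  | a :: w =>
      (if a = some i then single (FreeMonoid.ofList (none :: w)) 1 else 0) +
        single (FreeMonoid.of a) 1 * wordDer i w

def der (i : Fin g) (p : R[FreeMonoid (Var g)]) : R[FreeMonoid (Var g)] :=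
  p.coeff.sum fun w c => c • wordDer R i w.toList

def lap (p : R[FreeMonoid (Var g)]) : R[FreeMonoid (Var g)] := ∑ i : Fin g, der R i (der R i p)

variable {R}

lemma wordD_eq_wordDer (i : Fin g) (w : List (Var g)) : wordD g i w = wordDer ℝ i w := by
  induction w with
  | nil => rfl
  | cons a w ih => simp only [wordD, wordDer, ih]; rfl

lemma D_eq_der (i : Fin g) : D g i = der ℝ i := by
  ext1 p
  simp only [D, der, wordD_eq_wordDer]

lemma Lap_eq_lap : Lap g = lap ℝ := by
  ext1 p
  simp only [Lap, lap, D_eq_der]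

lemma wordDer_append (i : Fin g) (u v : List (Var g)) :
    wordDer R i (u ++ v) =
      wordDer R i u * single (FreeMonoid.ofList v) 1 +
        single (FreeMonoid.ofList u) 1 * wordDer R i v := by
  induction u with
  | nil => simp [wordDer, ← one_def]
  | cons a u ih =>
    simp only [List.cons_append, wordDer, ih, FreeMonoid.ofList_cons, FreeMonoid.ofList_append,
      add_mul, mul_add, ite_mul, zero_mul, single_mul_single, mul_one, ← mul_assoc, add_assoc]

lemma der_zero (i : Fin g) : der R i 0 = 0 := Finsupp.sum_zero_index

lemma der_add (i : Fin g) (p q : R[FreeMonoid (Var g)]) :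
    der R i (p + q) = der R i p + der R i q :=
  Finsupp.sum_add_index' (fun _ => zero_smul _ _) fun _ _ _ => add_smul _ _ _

lemma der_single (i : Fin g) (w : FreeMonoid (Var g)) (c : R) :
    der R i (single w c) = c • wordDer R i w.toList :=
  Finsupp.sum_single_index (zero_smul _ _)

lemma der_smul (i : Fin g) (c : R) (p : R[FreeMonoid (Var g)]) :
    der R i (c • p) = c • der R i p := by
  induction p using induction_linear with
  | zero => rw [smul_zero, der_zero, smul_zero]
  | add p q hp hq => rw [smul_add, der_add, der_add, hp, hq, smul_add]
  | single w r => rw [smul_single', der_single, der_single, smul_smul]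

lemma der_single_mul_single (i : Fin g) (u v : FreeMonoid (Var g)) :
    der R i (single u 1 * single v 1) =
      der R i (single u 1) * single v 1 + single u 1 * der R i (single v 1) := by
  rw [single_mul_single, mul_one, der_single, der_single, der_single, FreeMonoid.toList_mul,
    wordDer_append, FreeMonoid.ofList_toList, FreeMonoid.ofList_toList]
  simp only [one_smul]

lemma der_mul (i : Fin g) (p q : R[FreeMonoid (Var g)]) :
    der R i (p * q) = der R i p * q + p * der R i q := by
  induction p using induction_linear with
  | zero => simp [der_zero]
  | add p p' hp hp' => simp only [add_mul, der_add, hp, hp']; abel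
  | single u c =>
    induction q using induction_linear with
    | zero => simp [der_zero]
    | add q q' hq hq' => simp only [mul_add, der_add, hq, hq']; abel
    | single v d =>
      have single_eq_smul (m : FreeMonoid (Var g)) (r : R) : single m r = r • single m 1 := by
        rw [smul_single', mul_one]
      rw [single_eq_smul u, single_eq_smul v]
      simp only [der_smul, der_single_mul_single, smul_add, smul_mul_assoc, mul_smul_comm]

lemma der_algebraMap (i : Fin g) (c : R) :
    der R i (algebraMap R R[FreeMonoid (Var g)] c) = 0 := by
  rw [coe_algebraMap, Function.comp_apply, der_single]
  exact smul_zero c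

lemma der_mem_adjoin (i : Fin g)
    {s : Set R[FreeMonoid (Var g)]} (hs : ∀ x ∈ s, der R i x ∈ Algebra.adjoin R s)
    {p : R[FreeMonoid (Var g)]} (hp : p ∈ Algebra.adjoin R s) :
    der R i p ∈ Algebra.adjoin R s := by
  induction hp using Algebra.adjoin_induction with
  | mem x hx => exact hs x hx
  | algebraMap c => rw [der_algebraMap]; exact zero_mem _
  | add x y _ _ hx hy => rw [der_add]; exact add_mem hx hy
  | mul x y hx' hy' hx hy =>
    rw [der_mul]; exact add_mem (mul_mem hx hy') (mul_mem hx' hy)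

end Derivative

section CoeffMap

variable {R S : Type*} [CommSemiring R] [CommSemiring S] {g : ℕ} (φ : R →+ S)

lemma map_single_one_mul {M : Type*} [Monoid M] (u : M) (q : R[M]) :
    map φ (single u 1 * q) = single u 1 * map φ q := by
  induction q using induction_linear with
  | zero => simp
  | add p q hp hq => rw [mul_add, MonoidAlgebra.map_add, hp, hq, MonoidAlgebra.map_add, mul_add]
  | single v c => simp only [single_mul_single, one_mul, map_single]

lemma map_smul_wordDer (i : Fin g) (c : R) (w : List (Var g)) :
    map φ (c • wordDer R i w) = φ c • wordDer S i w := by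
  induction w with
  | nil => simp [wordDer]
  | cons a w ih =>
    simp only [wordDer, smul_add, ← mul_smul_comm, MonoidAlgebra.map_add, map_single_one_mul, ih,
      smul_ite, smul_zero, smul_single', mul_one, apply_ite (map φ), map_single,
      MonoidAlgebra.map_zero]

lemma map_der (i : Fin g) (p : R[FreeMonoid (Var g)]) : map φ (der R i p) = der S i (map φ p) := by
  induction p using induction_linear with
  | zero => simp [der_zero]
  | add p q hp hq => rw [der_add, MonoidAlgebra.map_add, hp, hq, MonoidAlgebra.map_add, der_add]
  | single w c => rw [der_single, map_single, der_single, map_smul_wordDer]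

lemma map_lap (p : R[FreeMonoid (Var g)]) : map φ (lap R p) = lap S (map φ p) := by
  simp only [lap, MonoidAlgebra.map_sum, map_der]

end CoeffMap

lemma rePart_eq_map (p : NCC) : rePart p = map Complex.reAddGroupHom p := rfl

lemma imPart_eq_map (p : NCC) : imPart p = map Complex.imAddGroupHom p := rfl

section CauchyRiemann

open Complex

def HC : NCC := single (FreeMonoid.of none) 1

lemma der_XC (i j : Fin 2) : der ℂ i (XC j) = if j = i then HC else 0 := by
  rw [XC, of_apply, der_single, one_smul]
  by_cases h : j = i <;> simp [wordDer, h, HC]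

lemma der_HC (i : Fin 2) : der ℂ i HC = 0 := by
  simp [HC, der_single, wordDer]

lemma der_zero_gam : der ℂ 0 gam = HC := by
  simp [gam, der_add, der_smul, der_XC]

lemma der_one_gam : der ℂ 1 gam = I • HC := by
  simp [gam, der_add, der_smul, der_XC]

def cauchyRiemann : Subalgebra ℂ NCC where
  carrier := {p | der ℂ 1 p = I • der ℂ 0 p}
  mul_mem' {p q} (hp : der ℂ 1 p = I • der ℂ 0 p) (hq : der ℂ 1 q = I • der ℂ 0 q) := by
    change der ℂ 1 (p * q) = I • der ℂ 0 (p * q)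
    rw [der_mul, der_mul, hp, hq, smul_add, smul_mul_assoc, mul_smul_comm]
  add_mem' {p q} (hp : der ℂ 1 p = I • der ℂ 0 p) (hq : der ℂ 1 q = I • der ℂ 0 q) := by
    change der ℂ 1 (p + q) = I • der ℂ 0 (p + q)
    rw [der_add, der_add, hp, hq, smul_add]
  algebraMap_mem' c := by
    change der ℂ 1 _ = I • der ℂ 0 _
    rw [der_algebraMap, der_algebraMap, smul_zero]

lemma adjoin_le_cauchyRiemann : Algebra.adjoin ℂ {gam, HC} ≤ cauchyRiemann := by
  refine Algebra.adjoin_le ?_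
  rintro _ (rfl | rfl)
  · show der ℂ 1 gam = I • der ℂ 0 gam
    rw [der_one_gam, der_zero_gam]
  · show der ℂ 1 HC = I • der ℂ 0 HC
    rw [der_HC, der_HC, smul_zero]

lemma lap_eq_zero_of_mem_adjoin {p : NCC} (hp : p ∈ Algebra.adjoin ℂ {gam, HC}) : lap ℂ p = 0 := by
  have hp0 : der ℂ 0 p ∈ Algebra.adjoin ℂ {gam, HC} := by
    refine der_mem_adjoin 0 ?_ hp
    rintro _ (rfl | rfl)
    · rw [der_zero_gam]; exact Algebra.subset_adjoin (Set.mem_insert_of_mem _ rfl)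
    · rw [der_HC]; exact zero_mem _
  have cr : der ℂ 1 p = I • der ℂ 0 p := adjoin_le_cauchyRiemann hp
  have cr0 : der ℂ 1 (der ℂ 0 p) = I • der ℂ 0 (der ℂ 0 p) := adjoin_le_cauchyRiemann hp0
  rw [lap, Fin.sum_univ_two, cr, der_smul, cr0, smul_smul, I_mul_I, neg_one_smul, add_neg_cancel]

end CauchyRiemann

theorem harmonic_gamma_pow_general (d : ℕ) :
    Lap 2 (rePart (gam ^ d)) = 0 ∧ Lap 2 (imPart (gam ^ d)) = 0 := by
  have harmonic : lap ℂ (gam ^ d) = 0 :=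
    lap_eq_zero_of_mem_adjoin (pow_mem (Algebra.subset_adjoin (Set.mem_insert _ _)) d)
  rw [Lap_eq_lap, rePart_eq_map, imPart_eq_map, ← map_lap, ← map_lap, harmonic]
  exact ⟨MonoidAlgebra.map_zero _, MonoidAlgebra.map_zero _⟩

/-- `Re(γ^d)` and `Im(γ^d)` are harmonic. -/
theorem harmonic_gamma_pow (d : ℕ) (hd : 1 ≤ d) :
    Lap 2 (rePart (gam ^ d)) = 0 ∧ Lap 2 (imPart (gam ^ d)) = 0 :=
  harmonic_gamma_pow_general d
end
end

section
/- Let p be a harmonic noncommutative polynomial in x_1,...,x_g and fix 0 < m. Write p = ∑_{|t|=m} x^t·p_t(x) + Λ where the sum is over words t of length m, p_t is the right neighbor of x^t, and deg Λ < m. Then each right neighbor p_t is harmonic: Lap[p_t, h] = 0. -/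
noncomputable section

/-!
`Lap` is a sum of squares of derivations, so
`Lap (x^u' q) = Lap (x^u') q + 2 ∑ᵢ D_i (x^u') D_i q + x^u' Lap q`. Every word in the first two
terms has an `h` among its first `|u'|` letters, and `x^u' Lap q` has right neighbor `Lap q` at
`x^u'` and zero right neighbor at every other word of that length. Taking the (linear) right
neighbor of `x^t` in `Lap p = 0` therefore leaves exactly `Lap p_t`; `Λ` contributes nothing,
its words being too short.
-/

namespace NC

variable {g : ℕ}

open MonoidAlgebra

lemma mono_eq_single (u : List (Var g)) : mono g u = single (FreeMonoid.ofList u) 1 := rfl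

lemma mono_append (u v : List (Var g)) : mono g (u ++ v) = mono g u * mono g v := by
  simp [mono]

lemma mono_nil : mono g [] = 1 := rfl

lemma support_mono (u : List (Var g)) :
    ∀ w ∈ (mono g u).coeff.support, FreeMonoid.toList w = u := by
  intro w hw
  rw [Finset.mem_singleton.mp (Finsupp.support_single_subset hw)]
  rfl

lemma wordD_append (i : Fin g) (u v : List (Var g)) :
    wordD g i (u ++ v) = wordD g i u * mono g v + mono g u * wordD g i v := by
  induction u with
  | nil => simp [wordD, mono_nil]
  | cons a w ih =>
    have hnone : mono g (none :: (w ++ v)) = mono g (none :: w) * mono g v :=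
      mono_append (none :: w) v
    have ha : mono g (a :: w) = mono g [a] * mono g w := mono_append [a] w
    simp only [List.cons_append, wordD, ih, hnone, ha, add_mul, mul_add, ← mul_assoc]
    split <;> noncomm_ring

def derivₗ (i : Fin g) : NC g →ₗ[ℝ] NC g :=
  (basis (FreeMonoid (Var g)) ℝ).constr ℝ fun w => wordD g i (FreeMonoid.toList w)

lemma derivₗ_apply (i : Fin g) (p : NC g) : derivₗ i p = D g i p := by
  rw [derivₗ, Module.Basis.constr_apply]
  rfl

lemma D_add (i : Fin g) (p q : NC g) : D g i (p + q) = D g i p + D g i q := by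
  simp only [← derivₗ_apply, map_add]

lemma D_smul (i : Fin g) (c : ℝ) (p : NC g) : D g i (c • p) = c • D g i p := by
  simp only [← derivₗ_apply, map_smul]

lemma D_mono (i : Fin g) (u : List (Var g)) : D g i (mono g u) = wordD g i u := by
  rw [← derivₗ_apply, derivₗ, mono_eq_single, ← basis_apply, Module.Basis.constr_basis]
  rfl

lemma D_mul (i : Fin g) (p q : NC g) : D g i (p * q) = D g i p * q + p * D g i q := by
  induction p using induction_linear with
  | zero => simp only [zero_mul, ← derivₗ_apply, map_zero, add_zero]
  | add a b ha hb => rw [add_mul, D_add, ha, hb, D_add]; noncomm_ring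
  | single w c =>
    induction q using induction_linear with
    | zero => simp only [mul_zero, ← derivₗ_apply, map_zero, add_zero]
    | add a b ha hb => rw [mul_add, D_add, ha, hb, D_add]; noncomm_ring
    | single v d =>
      have hsingle : ∀ (x : FreeMonoid (Var g)) (r : ℝ),
          single x r = r • mono g (FreeMonoid.toList x) := fun x r => by
        rw [mono_eq_single, FreeMonoid.ofList_toList, smul_single, smul_eq_mul, mul_one]
      rw [single_mul_single, hsingle, hsingle w, hsingle v, D_smul, D_smul, D_smul, D_mono,
        D_mono, D_mono, FreeMonoid.toList_mul, wordD_append, smul_mul_smul_comm,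
        smul_mul_smul_comm, smul_add]

lemma Lap_mul (a b : NC g) :
    Lap g (a * b) = Lap g a * b + 2 • ∑ i, D g i a * D g i b + a * Lap g b := by
  simp only [Lap, Finset.smul_sum, Finset.mul_sum, Finset.sum_mul, ← Finset.sum_add_distrib]
  refine Finset.sum_congr rfl fun i _ => ?_
  rw [D_mul, D_add, D_mul, D_mul, two_nsmul]
  abel

lemma Lap_add (p q : NC g) : Lap g (p + q) = Lap g p + Lap g q := by
  simp only [Lap, D_add, Finset.sum_add_distrib]

lemma Lap_sum {ι : Type*} (s : Finset ι) (f : ι → NC g) :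
    Lap g (∑ a ∈ s, f a) = ∑ a ∈ s, Lap g (f a) :=
  map_sum (AddMonoidHom.mk' (Lap g) Lap_add) f s

lemma support_wordD (i : Fin g) (u : List (Var g)) :
    ∀ v ∈ (wordD g i u).coeff.support,
      (FreeMonoid.toList v).length = u.length ∧ none ∈ FreeMonoid.toList v := by
  classical
  induction u with
  | nil => simp [wordD]
  | cons a w ih =>
    intro v hv
    rcases Finset.mem_union.mp (Finsupp.support_add hv) with hv | hv
    · split_ifs at hv with hai
      · rw [support_mono _ v hv]
        simp
      · simp at hv
    · obtain ⟨x, hx, y, hy, rfl⟩ :=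
        Finset.mem_mul.mp (support_coeff_mul_subset (mono g [a]) (wordD g i w) hv)
      obtain ⟨hlen, hnone⟩ := ih y hy
      simp [FreeMonoid.toList_mul, support_mono _ x hx, hlen, hnone]

lemma support_D (i : Fin g) {P : ℕ → Prop} {p : NC g}
    (hp : ∀ w ∈ p.coeff.support, P (FreeMonoid.toList w).length) :
    ∀ v ∈ (D g i p).coeff.support,
      P (FreeMonoid.toList v).length ∧ none ∈ FreeMonoid.toList v := by
  classical
  intro v hv
  rw [D, coeff_finsuppSum] at hv
  obtain ⟨w, hw, hvw⟩ := Finset.mem_biUnion.mp (Finsupp.support_sum hv)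
  obtain ⟨hlen, hnone⟩ := support_wordD i _ v (Finsupp.support_smul hvw)
  exact ⟨hlen ▸ hp w hw, hnone⟩

lemma support_Lap {P : ℕ → Prop} {p : NC g}
    (hp : ∀ w ∈ p.coeff.support, P (FreeMonoid.toList w).length) :
    ∀ v ∈ (Lap g p).coeff.support,
      P (FreeMonoid.toList v).length ∧ none ∈ FreeMonoid.toList v := by
  intro v hv
  rw [Lap, coeff_sum] at hv
  obtain ⟨i, -, hv⟩ := Finsupp.mem_support_finsetSum v hv
  exact support_D i (fun w hw => (support_D i hp w hw).1) v hv

/-- The right neighbor of `x^u` in `q`: the sum of `c • x^v` over the terms `c • x^(u ++ v)`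
of `q`, so that `rightNeighbor (t.map some) p` is the paper's `p_t`. -/
def rightNeighbor (u : List (Var g)) : NC g →ₗ[ℝ] NC g :=
  (basis (FreeMonoid (Var g)) ℝ).constr ℝ fun w =>
    if u <+: FreeMonoid.toList w then mono g ((FreeMonoid.toList w).drop u.length) else 0

lemma rightNeighbor_mono (u v : List (Var g)) :
    rightNeighbor u (mono g v) = if u <+: v then mono g (v.drop u.length) else 0 := by
  rw [rightNeighbor, mono_eq_single, ← basis_apply, Module.Basis.constr_basis]
  rfl

lemma rightNeighbor_mono_mul (u : List (Var g)) (q : NC g) :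
    rightNeighbor u (mono g u * q) = q := by
  suffices rightNeighbor u ∘ₗ LinearMap.mulLeft ℝ (mono g u) = LinearMap.id from
    LinearMap.congr_fun this q
  refine (basis (FreeMonoid (Var g)) ℝ).ext fun w => ?_
  rw [LinearMap.comp_apply, LinearMap.mulLeft_apply, basis_apply, ← FreeMonoid.ofList_toList w,
    ← mono_eq_single, ← mono_append, rightNeighbor_mono, if_pos (List.prefix_append _ _),
    List.drop_left]
  rfl

lemma rightNeighbor_eq_zero {u : List (Var g)} {q : NC g}
    (hq : ∀ w ∈ q.coeff.support, ¬ u <+: FreeMonoid.toList w) : rightNeighbor u q = 0 := by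
  rw [rightNeighbor, Module.Basis.constr_apply]
  exact Finset.sum_eq_zero fun w hw => by simp [hq w hw]

lemma rightNeighbor_eq_zero_of_length_lt {u : List (Var g)} {q : NC g}
    (hq : ∀ w ∈ q.coeff.support, (FreeMonoid.toList w).length < u.length) :
    rightNeighbor u q = 0 :=
  rightNeighbor_eq_zero fun w hw hu => (hq w hw).not_ge hu.length_le

lemma rightNeighbor_mul_eq_zero {u : List (Var g)} {r : NC g} (s : NC g)
    (hr : ∀ w ∈ r.coeff.support,
      (FreeMonoid.toList w).length = u.length ∧ FreeMonoid.toList w ≠ u) :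
    rightNeighbor u (r * s) = 0 := by
  classical
  refine rightNeighbor_eq_zero fun v hv hu => ?_
  obtain ⟨w, hw, x, -, rfl⟩ := Finset.mem_mul.mp (support_coeff_mul_subset r s hv)
  obtain ⟨hlen, hne⟩ := hr w hw
  rw [FreeMonoid.toList_mul] at hu
  exact hne ((List.prefix_of_prefix_length_le hu (List.prefix_append _ _) hlen.ge).eq_of_length
    hlen.symm).symm

lemma rightNeighbor_Lap_mono_mul {u u' : List (Var g)} (hu : none ∉ u)
    (hlen : u'.length = u.length) (q : NC g) :
    rightNeighbor u (Lap g (mono g u' * q)) = if u' = u then Lap g q else 0 := by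
  have hmono : ∀ w ∈ (mono g u').coeff.support, (FreeMonoid.toList w).length = u.length :=
    fun w hw => support_mono u' w hw ▸ hlen
  have hne : ∀ {v : FreeMonoid (Var g)},
      none ∈ FreeMonoid.toList v → FreeMonoid.toList v ≠ u :=
    fun hv h => hu (h ▸ hv)
  have hLap : rightNeighbor u (Lap g (mono g u') * q) = 0 :=
    rightNeighbor_mul_eq_zero q fun w hw =>
      (support_Lap (P := (· = u.length)) hmono w hw).imp_right hne
  have hmixed : ∀ i, rightNeighbor u (D g i (mono g u') * D g i q) = 0 := fun i =>
    rightNeighbor_mul_eq_zero _ fun w hw =>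
      (support_D i (P := (· = u.length)) hmono w hw).imp_right hne
  rw [Lap_mul, map_add, map_add, map_nsmul, map_sum, hLap, Finset.sum_eq_zero fun i _ => hmixed i,
    smul_zero, zero_add, zero_add]
  split_ifs with h
  · rw [h, rightNeighbor_mono_mul]
  · refine rightNeighbor_mul_eq_zero _ fun w hw => ?_
    rw [support_mono u' w hw]
    exact ⟨hlen, h⟩

end NC

open NC in
theorem right_neighbor_harmonic_general (g m : ℕ)
    (p Λ : NC g) (T : Finset (List (Fin g))) (pt : List (Fin g) → NC g)
    (hT : ∀ t ∈ T, t.length = m)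
    (hΛdeg : ∀ w ∈ Λ.coeff.support, (FreeMonoid.toList w).length < m)
    (hdecomp : p = (∑ t ∈ T, mono g (t.map some) * pt t) + Λ)
    (hharm : Lap g p = 0) :
    ∀ t ∈ T, Lap g (pt t) = 0 := by
  intro t ht
  have hu : (none : Var g) ∉ t.map some := by simp
  have hterm : ∀ t' ∈ T, rightNeighbor (t.map some) (Lap g (mono g (t'.map some) * pt t')) =
      if t' = t then Lap g (pt t) else 0 := fun t' ht' => by
    rw [rightNeighbor_Lap_mono_mul hu (by simp [hT t ht, hT t' ht'])]
    by_cases h : t' = t <;> simp [h, List.map_inj_right]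
  have hΛ : rightNeighbor (t.map some) (Lap g Λ) = 0 :=
    rightNeighbor_eq_zero_of_length_lt fun v hv => by
      simpa [hT t ht] using (support_Lap (P := (· < m)) hΛdeg v hv).1
  calc Lap g (pt t)
      = rightNeighbor (t.map some) (Lap g p) := by
        rw [hdecomp, Lap_add, Lap_sum, map_add, map_sum, hΛ, Finset.sum_congr rfl hterm,
          Finset.sum_ite_eq', if_pos ht, add_zero]
    _ = 0 := by rw [hharm, map_zero]

/-- in the right-neighbor decomposition of a harmonic polynomial,
every right neighbor is harmonic. -/
theorem right_neighbor_harmonic (g m : ℕ) (hm : 0 < m)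
    (p Λ : NC g) (T : Finset (List (Fin g))) (pt : List (Fin g) → NC g)
    (hT : ∀ t ∈ T, t.length = m)
    (hpt : ∀ t ∈ T, NoH g (pt t))
    (hΛdeg : ∀ w ∈ Λ.coeff.support, (FreeMonoid.toList w).length < m)
    (hΛ : NoH g Λ) (hpx : NoH g p)
    (hdecomp : p = (∑ t ∈ T, mono g (t.map some) * pt t) + Λ)
    (hharm : Lap g p = 0) :
    ∀ t ∈ T, Lap g (pt t) = 0 :=
  right_neighbor_harmonic_general g m p Λ T pt hT hΛdeg hdecomp hharm
end
end

section
/- For every d ≥ 3, every harmonic noncommutative polynomial in two variables x_1, x_2 that is homogeneous of degree d is a real linear combination of Re(γ^d) and Im(γ^d), where γ = x_1 + i·x_2. Hence {Re(γ^d), Im(γ^d)} is a basis of the space of homogeneous harmonic polynomials of degree d. -/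
noncomputable section

/-! Coefficientwise, `D xᵢ (D xᵢ p)` at a word with `h` in exactly two positions is twice the
coefficient of `p` at the word with `xᵢ` put in both, so harmonicity says: for every word in
`x₁, x₂` and any two positions, the coefficients of the words obtained by writing `x₁` in both
positions and `x₂` in both positions add up to zero. Trading two `x₂`'s for two `x₁`'s therefore
flips the sign of a coefficient, and when `d ≥ 3` a third position shows that all words with a
single `x₂` have the same coefficient. So the coefficient of a word with `k` letters `x₂` is
`Re (i^k) α + Im (i^k) β`, where `α` and `β` are the coefficients of `x₁^d` and `x₂ x₁^(d-1)`;
this is its coefficient in `α Re γ^d + β Im γ^d`, because its coefficient in `γ^d` is `i^k`. -/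

open Finset Function Complex

section Words

variable {g d : ℕ}

lemma coeff_mono_ofList (w l : List (Var g)) :
    (mono g w).coeff (FreeMonoid.ofList l) = if w = l then 1 else 0 := by
  classical
  simp only [mono, MonoidAlgebra.of_apply, MonoidAlgebra.coeff_single, Finsupp.single_apply,
    FreeMonoid.ofList.injective.eq_iff]

lemma coeff_mono_singleton_mul_cons (c x : Var g) (l : List (Var g)) (q : NC g) :
    (mono g [c] * q).coeff (FreeMonoid.ofList (x :: l)) =
      if c = x then q.coeff (FreeMonoid.ofList l) else 0 := by
  split_ifs with hcx
  · subst hcx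
    refine (MonoidAlgebra.coeff_single_mul_eq_mul_coeff _ fun m _ => ?_).trans (one_mul _)
    rw [← FreeMonoid.toList.injective.eq_iff]
    simp only [FreeMonoid.toList_mul, FreeMonoid.toList_ofList, List.singleton_append,
      List.cons.injEq, true_and]
    exact ⟨fun h => by rw [← h]; rfl, fun h => by rw [h]; rfl⟩
  · refine MonoidAlgebra.coeff_single_mul_of_forall_mul_ne _ _ fun m h => hcx ?_
    exact (List.cons_eq_cons.mp (congrArg FreeMonoid.toList h)).1

lemma coeff_wordD_ofFn (i : Fin g) (w : List (Var g)) {n : ℕ} (f : Fin n → Var g) :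
    (wordD g i w).coeff (FreeMonoid.ofList (List.ofFn f)) =
      ∑ a, if f a = none ∧ List.ofFn (update f a (some i)) = w then 1 else 0 := by
  induction w generalizing n with
  | nil => cases n <;> simp [wordD]
  | cons c w ih =>
    cases n with
    | zero =>
      have hsnd : (mono g [c] * wordD g i w).coeff (FreeMonoid.ofList []) = 0 :=
        MonoidAlgebra.coeff_single_mul_of_forall_mul_ne _ _ fun m h =>
          List.cons_ne_nil _ _ (congrArg FreeMonoid.toList h)
      simp only [wordD, List.ofFn_zero, univ_eq_empty, sum_empty, MonoidAlgebra.coeff_add,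
        Finsupp.add_apply, hsnd, add_zero]
      split_ifs
      · rw [coeff_mono_ofList, if_neg (List.cons_ne_nil _ _)]
      · rfl
    | succ n =>
      obtain ⟨x, f, rfl⟩ : ∃ x f', f = Fin.cons x f' :=
        ⟨f 0, Fin.tail f, (Fin.cons_self_tail f).symm⟩
      rw [Fin.sum_univ_succ, wordD, MonoidAlgebra.coeff_add, Finsupp.add_apply, List.ofFn_cons,
        coeff_mono_singleton_mul_cons, ih]
      simp only [← Fin.cons_update, Fin.update_cons_zero, List.ofFn_cons, Fin.cons_zero,
        Fin.cons_succ]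
      congr 1
      · by_cases hc : c = some i
        · rw [if_pos hc, coeff_mono_ofList]
          simp [hc, eq_comm]
        · rw [if_neg hc]
          simp [Ne.symm hc]
      · by_cases hc : c = x
        · simp [hc]
        · simp [hc, Ne.symm hc]

lemma coeff_D_ofFn (i : Fin g) (p : NC g) {n : ℕ} (f : Fin n → Var g) :
    (D g i p).coeff (FreeMonoid.ofList (List.ofFn f)) =
      ∑ a, if f a = none then p.coeff (FreeMonoid.ofList (List.ofFn (update f a (some i))))
        else 0 := by
  classical
  simp only [D, MonoidAlgebra.coeff_finsuppSum, Finsupp.sum_apply, MonoidAlgebra.coeff_smul,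
    Finsupp.smul_apply, coeff_wordD_ofFn, smul_eq_mul, mul_sum, mul_ite, mul_one, mul_zero]
  rw [Finsupp.sum, Finset.sum_comm]
  refine Finset.sum_congr rfl fun a _ => ?_
  split_ifs with ha
  · simp only [ha, true_and, ← FreeMonoid.toList.symm_apply_eq, FreeMonoid.toList_symm]
    rw [Finset.sum_ite_eq, ite_eq_left_iff, Finsupp.mem_support_iff, not_not]
    exact Eq.symm
  · simp [ha]

lemma coeff_Lap_ofFn (p : NC g) {n : ℕ} (f : Fin n → Var g) {a b : Fin n} (hab : a ≠ b)
    (hf : ∀ c, f c = none ↔ c = a ∨ c = b) :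
    (Lap g p).coeff (FreeMonoid.ofList (List.ofFn f)) =
      2 * ∑ i, p.coeff (.ofList (.ofFn (update (update f a (some i)) b (some i)))) := by
  classical
  simp only [Lap, MonoidAlgebra.coeff_sum, Finsupp.finsetSum_apply, mul_sum]
  refine sum_congr rfl fun i _ => ?_
  have hnone : ∀ {s t}, s ≠ t → (∀ c, f c = none ↔ c = s ∨ c = t) →
      ∀ c, update f s (some i) c = none ↔ c = t := by
    intro s t hst hf c
    rcases eq_or_ne c s with rfl | hcs
    · simpa using hst
    · simpa [hcs] using hf c
  have hfilter : univ.filter (f · = none) = {a, b} := by ext c; simp [hf]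
  simp only [coeff_D_ofFn, ← Finset.sum_filter, hfilter, sum_pair hab, hnone hab hf,
    hnone hab.symm (fun c => (hf c).trans or_comm), filter_eq', mem_univ, if_true,
    sum_singleton, update_comm hab.symm, two_mul]

def xWord (v : Fin d → Fin g) : FreeMonoid (Var g) :=
  FreeMonoid.ofList (List.ofFn (some ∘ v))

lemma xWord_injective : Injective (xWord : (Fin d → Fin g) → FreeMonoid (Var g)) :=
  FreeMonoid.ofList.injective.comp (List.ofFn_injective.comp (Option.some_injective _).comp_left)

lemma HomogX.coeff_eq_zero {p : NC g} (hp : HomogX g d p) {t : FreeMonoid (Var g)}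
    (ht : t ∉ Set.range (xWord (d := d))) : p.coeff t = 0 := by
  refine by_contra fun hpt => ht ?_
  obtain ⟨hnone, hlen⟩ := hp t (Finsupp.mem_support_iff.mpr hpt)
  have : ∀ a : Fin d, ∃ j, t.toList[a] = some j := fun a =>
    Option.ne_none_iff_exists'.mp fun h => hnone (h ▸ List.getElem_mem _)
  choose v hv using this
  refine ⟨v, FreeMonoid.toList.injective (List.ext_getElem (by simp [xWord, hlen]) ?_)⟩
  intro n h₁ h₂
  simpa [xWord] using (hv ⟨n, by omega⟩).symm

lemma sum_coeff_xWord_update_update_eq_zero {p : NC g} (hp : Lap g p = 0)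
    (v : Fin d → Fin g) {a b : Fin d} (hab : a ≠ b) :
    ∑ i, p.coeff (xWord (update (update v a i) b i)) = 0 := by
  have hf : ∀ c, update (update (some ∘ v) a none) b none c = none ↔ c = a ∨ c = b := by
    intro c
    simp only [update_apply]
    split_ifs <;> simp_all
  have hlap := coeff_Lap_ofFn p _ hab hf
  rw [hp, MonoidAlgebra.coeff_zero, Finsupp.zero_apply, eq_comm, mul_eq_zero] at hlap
  rw [← hlap.resolve_left two_ne_zero]
  refine sum_congr rfl fun i _ => congrArg (p.coeff ∘ FreeMonoid.ofList ∘ List.ofFn) ?_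
  funext c
  simp only [update_apply, comp_apply]
  split_ifs <;> rfl

end Words

lemma sum_single_of_pow {R α ι : Type*} [CommSemiring R] [Fintype ι] (x : ι → α) (z : ι → R)
    (d : ℕ) :
    (∑ j, MonoidAlgebra.single (FreeMonoid.of (x j)) (z j)) ^ d =
      ∑ v : Fin d → ι,
        MonoidAlgebra.single (FreeMonoid.ofList (List.ofFn (x ∘ v))) (∏ a, z (v a)) := by
  induction d with
  | zero =>
    simp only [pow_zero, univ_unique, List.ofFn_zero, FreeMonoid.ofList_nil, univ_eq_empty,
      prod_empty, sum_const, card_singleton, one_smul]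
    rfl
  | succ d ih =>
    rw [pow_succ', ih, sum_mul_sum, ← (Fin.consEquiv fun _ => ι).sum_comp, Fintype.sum_prod_type]
    refine sum_congr rfl fun j _ => sum_congr rfl fun v _ => ?_
    simp only [MonoidAlgebra.single_mul_single, List.ofFn_succ, comp_apply, Fin.consEquiv_apply,
      Fin.cons_zero, Fin.cons_succ, FreeMonoid.ofList_cons, Fin.prod_univ_succ]
    rfl

section TwoLetters

variable {d : ℕ}

lemma update_update_eq_self {α : Type*} {v : Fin d → α} {s t : Fin d} {x : α} (hs : v s = x)
    (ht : v t = x) : update (update v s x) t x = v := by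
  rw [← hs, update_eq_self, hs, ← ht, update_eq_self]

def numOnes (v : Fin d → Fin 2) : ℕ := #{a | v a = 1}

@[simp] lemma numOnes_zero : numOnes (0 : Fin d → Fin 2) = 0 := by simp [numOnes]

@[simp] lemma numOnes_single (q : Fin d) : numOnes (Pi.single q 1 : Fin d → Fin 2) = 1 := by
  rw [numOnes, card_eq_one]
  exact ⟨q, by ext a; by_cases h : a = q <;> simp [h]⟩

lemma eq_zero_of_numOnes_eq_zero {v : Fin d → Fin 2} (h : numOnes v = 0) : v = 0 := by
  funext a
  refine by_contra fun ha => ?_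
  have : a ∈ ({a | v a = 1} : Finset _) := by simpa using Fin.eq_one_of_ne_zero _ ha
  simp_all [numOnes]

lemma exists_eq_single_of_numOnes_eq_one {v : Fin d → Fin 2} (h : numOnes v = 1) :
    ∃ q, v = Pi.single q 1 := by
  obtain ⟨q, hq⟩ := card_eq_one.mp h
  refine ⟨q, funext fun a => ?_⟩
  have ha := congrArg (a ∈ ·) hq
  simp only [mem_filter, mem_univ, true_and, mem_singleton, eq_iff_iff] at ha
  rcases eq_or_ne a q with rfl | haq
  · simpa using ha
  · rw [Pi.single_eq_of_ne haq]
    exact by_contra fun h0 => haq (ha.mp (Fin.eq_one_of_ne_zero _ h0))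

lemma numOnes_update_update_zero {v : Fin d → Fin 2} {s t : Fin d} (hst : s ≠ t)
    (hs : v s = 1) (ht : v t = 1) : numOnes (update (update v s 0) t 0) + 2 = numOnes v := by
  unfold numOnes
  have : univ.filter (v · = 1) =
      insert s (insert t (univ.filter (update (update v s 0) t 0 · = 1))) := by
    ext a
    by_cases has : a = s <;> by_cases hat : a = t <;> simp_all
  rw [this, card_insert_of_notMem (by simp [hst]), card_insert_of_notMem (by simp)]

lemma apply_single_eq_apply_single {c : (Fin d → Fin 2) → ℝ}
    (hc : ∀ v a b, a ≠ b → ∑ i, c (update (update v a i) b i) = 0) (hd : 3 ≤ d)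
    (q q' : Fin d) :
    c (Pi.single q 1) = c (Pi.single q' 1) := by
  rcases eq_or_ne q q' with rfl | hqq'
  · rfl
  obtain ⟨r, hrq, hrq'⟩ := Fin.exists_ne_and_ne_of_two_lt q q' (by omega)
  have hq := hc (Pi.single q 1) q' r hrq'.symm
  have hq' := hc (Pi.single q' 1) q r hrq.symm
  rw [Fin.sum_univ_two, update_update_eq_self (by simp [hqq'.symm]) (by simp [hrq])] at hq
  rw [Fin.sum_univ_two, update_update_eq_self (by simp [hqq']) (by simp [hrq'])] at hq'
  have hthree : update (update (Pi.single q 1 : Fin d → Fin 2) q' 1) r 1 =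
      update (update (Pi.single q' 1) q 1) r 1 := by
    funext a
    by_cases haq : a = q <;> by_cases haq' : a = q' <;> simp_all [update_apply]
  rw [hthree] at hq
  linarith

lemma apply_eq_of_pair_relation {c : (Fin d → Fin 2) → ℝ}
    (hc : ∀ v a b, a ≠ b → ∑ i, c (update (update v a i) b i) = 0) (hd : 3 ≤ d)
    (q : Fin d) (v : Fin d → Fin 2) :
    c v = (I ^ numOnes v).re * c 0 + (I ^ numOnes v).im * c (Pi.single q 1) := by
  induction hk : numOnes v using Nat.strong_induction_on generalizing v with
  | _ k ih =>
    match k, hk with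
    | 0, hk => simp [eq_zero_of_numOnes_eq_zero hk]
    | 1, hk =>
      obtain ⟨q', rfl⟩ := exists_eq_single_of_numOnes_eq_one hk
      simpa using apply_single_eq_apply_single hc hd q' q
    | k + 2, hk =>
      obtain ⟨s, hs, t, ht, hst⟩ := one_lt_card.mp (show 1 < numOnes v by omega)
      simp only [mem_filter, mem_univ, true_and] at hs ht
      have hv := hc v s t hst
      rw [Fin.sum_univ_two, update_update_eq_self hs ht] at hv
      have hw := numOnes_update_update_zero hst hs ht
      rw [ih k (by omega) _ (by omega)] at hv
      rw [pow_add, I_sq]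
      simp only [mul_neg, mul_one, neg_re, neg_im]
      linarith

end TwoLetters

lemma gam_eq : gam = ∑ j, MonoidAlgebra.single (FreeMonoid.of (some j)) (![1, I] j) := by
  simp [gam, XC, Fin.sum_univ_two, MonoidAlgebra.of_apply, MonoidAlgebra.smul_single]

lemma prod_vecCons_one_I {d : ℕ} (v : Fin d → Fin 2) : ∏ a, ![1, I] (v a) = I ^ numOnes v := by
  have h : ∀ j : Fin 2, ![1, I] j = if j = 1 then I else 1 := by
    intro j; fin_cases j <;> rfl
  simp only [h, prod_ite, prod_const, one_pow, mul_one, numOnes]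

lemma gam_pow (d : ℕ) :
    gam ^ d = ∑ v : Fin d → Fin 2, MonoidAlgebra.single (xWord v) (I ^ numOnes v) := by
  simp only [gam_eq, sum_single_of_pow, prod_vecCons_one_I]
  rfl

lemma coeff_gam_pow_xWord {d : ℕ} (v : Fin d → Fin 2) :
    (gam ^ d).coeff (xWord v) = I ^ numOnes v := by
  classical
  simp [gam_pow, Finsupp.single_apply, xWord_injective.eq_iff]

lemma coeff_gam_pow_eq_zero {d : ℕ} {t : FreeMonoid (Var 2)}
    (ht : t ∉ Set.range (xWord (d := d))) : (gam ^ d).coeff t = 0 := by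
  classical
  simp only [gam_pow, MonoidAlgebra.coeff_sum, Finsupp.finsetSum_apply, MonoidAlgebra.coeff_single,
    Finsupp.single_apply]
  exact sum_eq_zero fun v _ => if_neg fun h => ht ⟨v, h⟩

@[simp] lemma coeff_rePart (p : NCC) (t : FreeMonoid (Var 2)) :
    (rePart p).coeff t = (p.coeff t).re := rfl

@[simp] lemma coeff_imPart (p : NCC) (t : FreeMonoid (Var 2)) :
    (imPart p).coeff t = (p.coeff t).im := rfl

/-- for `d ≥ 3`, `{Re(γ^d), Im(γ^d)}` is a basis for the homogeneous
harmonic polynomials of degree `d` in two variables. -/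
theorem harmonic_basis (d : ℕ) (hd : 3 ≤ d) :
    (∀ p : NC 2, HomogX 2 d p → Lap 2 p = 0 →
        ∃ a b : ℝ, p = a • rePart (gam ^ d) + b • imPart (gam ^ d)) ∧
    LinearIndependent ℝ ![rePart (gam ^ d), imPart (gam ^ d)] := by
  let e : Fin d → Fin 2 := Pi.single ⟨0, by omega⟩ 1
  refine ⟨fun p hp hl => ⟨p.coeff (xWord (0 : Fin d → Fin 2)), p.coeff (xWord e), ?_⟩, ?_⟩
  · ext t
    by_cases ht : t ∈ Set.range (xWord (d := d))
    · obtain ⟨v, rfl⟩ := ht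
      simpa [coeff_gam_pow_xWord, mul_comm] using
        apply_eq_of_pair_relation (c := fun v => p.coeff (xWord v))
          (fun v _ _ => sum_coeff_xWord_update_update_eq_zero hl v) hd _ v
    · simp [hp.coeff_eq_zero ht, coeff_gam_pow_eq_zero ht]
  · rw [LinearIndependent.pair_iff]
    intro s t hst
    have h0 := congrArg (·.coeff (xWord (0 : Fin d → Fin 2))) hst
    have h1 := congrArg (·.coeff (xWord e)) hst
    simp [coeff_gam_pow_xWord, e] at h0 h1
    exact ⟨h0, h1⟩
end
end

section
/- Zeroes Lemma: let S be an N×N symmetric matrix with noncommutative polynomial entries. If some diagonal entry S_{ii} = 0 while a corresponding off-diagonal entry S_{ij} = (S_{ji})^T is nonzero, then S is not matrix positive; i.e., there exist a size n, a tuple X of real symmetric n×n matrices, and a vector v ∈ R^{Nn} such that v^T S(X) v < 0. -/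
noncomputable section

/-!
Evaluate at the semicircular-type tuple `Xₐ = Lₐ + Lₐᵀ`, where `Lₐ` is left creation by the
letter `a` on the Fock space of words truncated at the length `d` of a longest word `w₀` of
`p = S i j`. Then `⟨w₀, p(X) ∅⟩` is the coefficient of `w₀` in `p`, so `p(X)` has a nonzero
entry `⟨x, p(X) y⟩ = c`. For symmetric `X` we have `S j i (X) = S i j (X)ᵀ`, so with `x` in block
`i` and `t y` in block `j` the quadratic form is `0 + 2tc + t² ⟨y, S j j (X) y⟩`, which is negative
for small `t` of sign opposite to `c`.
-/

open Matrix

section Evaluation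

variable {g : ℕ} {ι : Type} [Fintype ι] [DecidableEq ι]

def evalMat (M : Var g → Matrix ι ι ℝ) (p : NC g) : Matrix ι ι ℝ :=
  Finsupp.sum p.coeff fun w c => c • ((FreeMonoid.toList w).map M).prod

lemma eval_eq_evalMat (n : ℕ) (M : Var g → Matrix (Fin n) (Fin n) ℝ) (p : NC g) :
    eval g n M p = evalMat M p := rfl

@[simp]
lemma evalMat_zero (M : Var g → Matrix ι ι ℝ) : evalMat M (0 : NC g) = 0 :=
  Finsupp.sum_zero_index

lemma dotProduct_evalMat_mulVec (M : Var g → Matrix ι ι ℝ) (p : NC g) (x y : ι → ℝ) :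
    x ⬝ᵥ evalMat M p *ᵥ y =
      p.coeff.sum fun w c => c * (x ⬝ᵥ ((FreeMonoid.toList w).map M).prod *ᵥ y) := by
  simp only [evalMat, Finsupp.sum, Matrix.sum_mulVec, dotProduct_sum, Matrix.smul_mulVec,
    dotProduct_smul, smul_eq_mul]

lemma evalMat_map_algEquiv {κ : Type} [Fintype κ] [DecidableEq κ]
    (φ : Matrix ι ι ℝ ≃ₐ[ℝ] Matrix κ κ ℝ) (M : Var g → Matrix ι ι ℝ) (p : NC g) :
    evalMat (fun v => φ (M v)) p = φ (evalMat M p) := by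
  simp only [evalMat, map_finsuppSum, _root_.map_smul, map_list_prod, List.map_map]
  rfl

lemma evalMat_transp (M : Var g → Matrix ι ι ℝ) (hM : ∀ v, (M v).IsSymm) (p : NC g) :
    evalMat M (transp g p) = (evalMat M p)ᵀ := by
  have hMT : Matrix.transpose ∘ M = M := funext hM
  rw [evalMat, transp, MonoidAlgebra.coeff_ofCoeff,
    Finsupp.sum_mapDomain_index (by simp) (by simp [add_smul]),
    evalMat, Finsupp.sum, Finsupp.sum, Matrix.transpose_sum]
  refine Finset.sum_congr rfl fun w _ => ?_
  rw [Matrix.transpose_smul, Matrix.transpose_list_prod, List.map_map, hMT, ← List.map_reverse]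
  rfl

end Evaluation

namespace TruncatedFock

variable {g d : ℕ}

abbrev Word (g d : ℕ) := {l : List (Var g) // l.length ≤ d}

instance : Fintype (Word g d) :=
  have : Finite (Word g d) := (List.finite_length_le (Var g) d).to_subtype
  Fintype.ofFinite _

def basisVec (d : ℕ) (w : List (Var g)) : Word g d → ℝ := fun v => if v.1 = w then 1 else 0

def creation (d : ℕ) (a : Var g) : Matrix (Word g d) (Word g d) ℝ :=
  fun u v => if u.1 = a :: v.1 then 1 else 0

def field (d : ℕ) (a : Var g) : Matrix (Word g d) (Word g d) ℝ :=
  creation d a + (creation d a)ᵀ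

lemma field_isSymm (a : Var g) : (field d a).IsSymm :=
  Matrix.isSymm_add_transpose_self _

lemma basisVec_dotProduct {w : List (Var g)} (hw : w.length ≤ d) (z : Word g d → ℝ) :
    basisVec d w ⬝ᵥ z = z ⟨w, hw⟩ := by
  rw [dotProduct, Fintype.sum_eq_single ⟨w, hw⟩ fun v hv => by
    simp [basisVec, show v.1 ≠ w from fun h => hv (Subtype.ext h)]]
  simp [basisVec]

lemma creation_mulVec_cons (a b : Var g) (r : List (Var g)) (hr : (b :: r).length ≤ d)
    (f : Word g d → ℝ) :
    (creation d a *ᵥ f) ⟨b :: r, hr⟩ =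
      if b = a then f ⟨r, Nat.le_of_succ_le hr⟩ else 0 := by
  simp only [mulVec, dotProduct, creation, List.cons.injEq, ite_mul, one_mul, zero_mul]
  split_ifs with hba
  · subst hba
    rw [Fintype.sum_eq_single ⟨r, Nat.le_of_succ_le hr⟩ fun w hw => by
      simp [show r ≠ w.1 from fun h => hw (Subtype.ext h.symm)]]
    simp
  · simp [hba]

lemma creation_transpose_mulVec (a : Var g) (f : Word g d → ℝ) (v : Word g d) :
    ((creation d a)ᵀ *ᵥ f) v = if h : (a :: v.1).length ≤ d then f ⟨a :: v.1, h⟩ else 0 := by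
  simp only [mulVec, dotProduct, transpose_apply, creation, ite_mul, one_mul, zero_mul]
  split_ifs with h
  · rw [Fintype.sum_eq_single ⟨a :: v.1, h⟩ fun w hw => by
      simp [show w.1 ≠ a :: v.1 from fun hc => hw (Subtype.ext hc)]]
    simp
  · refine Finset.sum_eq_zero fun w _ => ?_
    simp only [ite_eq_right_iff]
    intro hw
    exact absurd (hw ▸ w.2) h

-- `u` applied to the vacuum is `u` plus strictly shorter words: each letter either creates
-- (adds one letter) or annihilates (removes one), and only `|u|` creations reach length `|u|`.
lemma field_prod_mulVec_vacuum (u : List (Var g)) (hu : u.length ≤ d) (v : Word g d)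
    (hv : u.length ≤ v.1.length) :
    ((u.map (field d)).prod *ᵥ basisVec d []) v = if v.1 = u then 1 else 0 := by
  induction u generalizing v with
  | nil => simp [basisVec]
  | cons a u ih =>
    have hu' : u.length ≤ d := Nat.le_of_succ_le hu
    rw [List.map_cons, List.prod_cons, ← mulVec_mulVec, field, add_mulVec, Pi.add_apply,
      creation_transpose_mulVec]
    have annihilated :
        (if h : (a :: v.1).length ≤ d then
          ((u.map (field d)).prod *ᵥ basisVec d []) ⟨a :: v.1, h⟩ else 0) = 0 := by
      split_ifs with h
      · rw [ih hu' _ (by simp at hv ⊢; omega), if_neg]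
        intro hc
        have := congrArg List.length hc
        simp at this hv
        omega
      · rfl
    rw [annihilated, add_zero]
    obtain ⟨_ | ⟨b, r⟩, hl⟩ := v
    · simp at hv
    · rw [creation_mulVec_cons]
      by_cases hba : b = a
      · rw [if_pos hba, ih hu' _ (by simp at hv ⊢; omega)]
        simp [hba]
      · simp [hba]

lemma basisVec_dotProduct_evalMat_field_mulVec_vacuum (p : NC g) (w₀ : FreeMonoid (Var g))
    (hw₀ : (FreeMonoid.toList w₀).length ≤ d)
    (hmax : ∀ w ∈ p.coeff.support, (FreeMonoid.toList w).length ≤ (FreeMonoid.toList w₀).length) :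
    basisVec d (FreeMonoid.toList w₀) ⬝ᵥ evalMat (field d) p *ᵥ basisVec d [] = p.coeff w₀ := by
  classical
  have entry : ∀ w ∈ p.coeff.support, basisVec d (FreeMonoid.toList w₀) ⬝ᵥ
      ((FreeMonoid.toList w).map (field d)).prod *ᵥ basisVec d [] = if w₀ = w then 1 else 0 :=
    fun w hw => by
      rw [basisVec_dotProduct hw₀, field_prod_mulVec_vacuum _ ((hmax w hw).trans hw₀) _ (hmax w hw)]
      simp only [FreeMonoid.toList.injective.eq_iff]
  rw [dotProduct_evalMat_mulVec, Finsupp.sum, Finset.sum_congr rfl fun w hw => by rw [entry w hw]]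
  simp +contextual

end TruncatedFock

lemma exists_isSymm_dotProduct_evalMat_mulVec_ne_zero {g : ℕ} {p : NC g} (hp : p ≠ 0) :
    ∃ (ι : Type) (_ : Fintype ι) (_ : DecidableEq ι) (M : Var g → Matrix ι ι ℝ),
      (∀ v, (M v).IsSymm) ∧ ∃ x y : ι → ℝ, x ⬝ᵥ evalMat M p *ᵥ y ≠ 0 := by
  have hsupp : p.coeff.support.Nonempty :=
    Finsupp.support_nonempty_iff.mpr (MonoidAlgebra.coeff_eq_zero.not.mpr hp)
  obtain ⟨w₀, hw₀, hmax⟩ := p.coeff.support.exists_max_image (FreeMonoid.toList · |>.length) hsupp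
  set d := (FreeMonoid.toList w₀).length
  refine ⟨TruncatedFock.Word g d, inferInstance, inferInstance, TruncatedFock.field d,
    TruncatedFock.field_isSymm, TruncatedFock.basisVec d (FreeMonoid.toList w₀),
    TruncatedFock.basisVec d [], ?_⟩
  rw [TruncatedFock.basisVec_dotProduct_evalMat_field_mulVec_vacuum p w₀ le_rfl hmax]
  exact Finsupp.mem_support_iff.mp hw₀

lemma exists_isSymm_dotProduct_eval_mulVec_ne_zero {g : ℕ} {p : NC g} (hp : p ≠ 0) :
    ∃ (n : ℕ) (M : Var g → Matrix (Fin n) (Fin n) ℝ),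
      (∀ v, (M v).IsSymm) ∧ ∃ x y : Fin n → ℝ, x ⬝ᵥ eval g n M p *ᵥ y ≠ 0 := by
  obtain ⟨ι, _, _, M, hM, x, y, hxy⟩ := exists_isSymm_dotProduct_evalMat_mulVec_ne_zero hp
  let e := Fintype.equivFin ι
  refine ⟨Fintype.card ι, fun v => reindexAlgEquiv ℝ ℝ e (M v),
    fun v => (hM v).submatrix e.symm, x ∘ e.symm, y ∘ e.symm, ?_⟩
  rwa [eval_eq_evalMat, evalMat_map_algEquiv, coe_reindexAlgEquiv, reindex_apply,
    submatrix_mulVec_equiv, Equiv.symm_symm, Function.comp_assoc, e.symm_comp_self,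
    Function.comp_id, comp_equiv_dotProduct_comp_equiv]

lemma sum_sum_dotProduct_mulVec_of_support_pair {R ι κ : Type*} [NonUnitalNonAssocSemiring R]
    [Fintype ι] [DecidableEq ι] [Fintype κ] (B : ι → ι → Matrix κ κ R) {i j : ι} (hij : i ≠ j)
    {v : ι → κ → R} (hv : ∀ k, k ≠ i ∧ k ≠ j → v k = 0) :
    ∑ k, ∑ l, v k ⬝ᵥ B k l *ᵥ v l =
      (v i ⬝ᵥ B i i *ᵥ v i + v i ⬝ᵥ B i j *ᵥ v j) + (v j ⬝ᵥ B j i *ᵥ v i + v j ⬝ᵥ B j j *ᵥ v j) := by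
  have inner (k : ι) : ∑ l, v k ⬝ᵥ B k l *ᵥ v l = v k ⬝ᵥ B k i *ᵥ v i + v k ⬝ᵥ B k j *ᵥ v j :=
    Fintype.sum_eq_add i j hij fun l hl => by simp [hv l hl]
  rw [Fintype.sum_eq_add i j hij, inner, inner]
  intro k hk
  simp [hv k hk]

lemma exists_two_mul_mul_add_sq_mul_neg {c : ℝ} (hc : c ≠ 0) (q : ℝ) :
    ∃ t : ℝ, 2 * (t * c) + t ^ 2 * q < 0 := by
  set s := |q| + 1
  have hs : 0 < s := by positivity
  refine ⟨-c / s, ?_⟩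
  have hlin : -c / s * c = -(c ^ 2 / s) := by ring
  have hquad : (-c / s) ^ 2 * q < c ^ 2 / s := calc
    (-c / s) ^ 2 * q < (-c / s) ^ 2 * s :=
      mul_lt_mul_of_pos_left (by linarith [le_abs_self q]) (by rw [neg_div, neg_sq]; positivity)
    _ = c ^ 2 / s := by field_simp
  linarith [show 0 < c ^ 2 / s by positivity]

theorem zeroes_lemma_general (g N : ℕ) (S : Fin N → Fin N → NC g)
    (hsym : ∀ i j, S j i = transp g (S i j))
    (i j : Fin N) (hdiag : S i i = 0) (hoff : S i j ≠ 0) :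
    ∃ (n : ℕ) (M : Var g → Matrix (Fin n) (Fin n) ℝ),
      (∀ v, (M v).IsSymm) ∧
      ∃ v : Fin N → Fin n → ℝ,
        (∑ k : Fin N, ∑ l : Fin N,
          dotProduct (v k) ((eval g n M (S k l)).mulVec (v l))) < 0 := by
  have hij : i ≠ j := by
    rintro rfl
    exact hoff hdiag
  obtain ⟨n, M, hM, a, b, hab⟩ := exists_isSymm_dotProduct_eval_mulVec_ne_zero hoff
  obtain ⟨t, ht⟩ := exists_two_mul_mul_add_sq_mul_neg hab (b ⬝ᵥ eval g n M (S j j) *ᵥ b)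
  set v : Fin N → Fin n → ℝ := Pi.single i a + Pi.single j (t • b)
  have hvi : v i = a := by simp [v, hij]
  have hvj : v j = t • b := by simp [v, hij.symm]
  have hv : ∀ k, k ≠ i ∧ k ≠ j → v k = 0 := fun k hk => by simp [v, hk.1, hk.2]
  refine ⟨n, M, hM, v, ?_⟩
  have hii : eval g n M (S i i) = 0 := by rw [hdiag]; exact evalMat_zero M
  have hji : eval g n M (S j i) = (eval g n M (S i j))ᵀ := by
    rw [hsym i j]; exact evalMat_transp M hM _
  rw [sum_sum_dotProduct_mulVec_of_support_pair _ hij hv, hvi, hvj, hii, hji, mulVec_transpose,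
    dotProduct_comm (t • b), ← dotProduct_mulVec]
  simp only [zero_mulVec, dotProduct_zero, mulVec_smul, dotProduct_smul, smul_dotProduct,
    smul_eq_mul]
  linarith

/-- Zeroes Lemma: a symmetric matrix of noncommutative polynomials
with a zero diagonal entry but a nonzero corresponding off-diagonal entry is not
matrix positive. -/
theorem zeroes_lemma (g N : ℕ) (S : Fin N → Fin N → NC g)
    (hnoH : ∀ i j, NoH g (S i j))
    (hsym : ∀ i j, S j i = transp g (S i j))
    (i j : Fin N) (hij : i ≠ j) (hdiag : S i i = 0) (hoff : S i j ≠ 0) :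
    ∃ (n : ℕ) (M : Var g → Matrix (Fin n) (Fin n) ℝ),
      (∀ v, (M v).IsSymm) ∧
      ∃ v : Fin N → Fin n → ℝ,
        (∑ k : Fin N, ∑ l : Fin N,
          dotProduct (v k) ((eval g n M (S k l)).mulVec (v l))) < 0 :=
  zeroes_lemma_general g N S hsym i j hdiag hoff
end
end
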